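/- Let 𝒜 = ℂ[E₁,E₂,A₀,A₁] with the derivation f as above, δ = 4E₂ − E₁² and v = A₀ − (1/2)E₁A₁. If j, m, n are natural numbers with m − n − 4j ≥ 0 and m − n − 4j even, then f^{m−n−4j+1}(δʲ A₁^m v^n) = 0. -/

import Mathlib

/-!
The elements `δ`, `A₁` and `v` are eigenvectors of `f` with eigenvalues `2E₁`, `-½E₁` and `½E₁`,
so the eigenvalues cancel in `W = δʲ A₁^(n+4j) vⁿ`: `f W = 0`, and `f` commutes with
multiplication by `W`. Writing `m - n - 4j = 2s`, the element is `(A₁²)ˢ W`, and since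
`f³ (A₁²) = 0`, the Leibniz rule gives `f^(2s+1) ((A₁²)ˢ) = 0`.
-/

open MvPolynomial

namespace Derivation

variable {R A : Type*} [CommSemiring R] [CommSemiring A] [Algebra R A] (D : Derivation R A A)

theorem pow_toLinearMap_succ_apply (k : ℕ) (x : A) :
    (D.toLinearMap ^ (k + 1)) x = (D.toLinearMap ^ k) (D x) := by
  rw [pow_succ, Module.End.mul_apply]
  rfl

theorem apply_mul_of_apply_eq_smul_mul {a b e : A} {c c' : R} (ha : D a = c • (e * a))
    (hb : D b = c' • (e * b)) : D (a * b) = (c + c') • (e * (a * b)) := by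
  rw [leibniz, ha, hb, smul_eq_mul, smul_eq_mul, mul_smul_comm, mul_smul_comm, add_smul,
    add_comm]
  congr 2 <;> ring

theorem apply_pow_of_apply_eq_smul_mul {a e : A} {c : R} (ha : D a = c • (e * a)) (t : ℕ) :
    D (a ^ t) = (t * c) • (e * a ^ t) := by
  induction t with
  | zero => simp
  | succ t ih =>
    rw [pow_succ, D.apply_mul_of_apply_eq_smul_mul ih ha]
    push_cast
    ring_nf

theorem pow_toLinearMap_apply_mul_of_apply_eq_zero {w : A} (hw : D w = 0) (k : ℕ) (a : A) :
    (D.toLinearMap ^ k) (a * w) = (D.toLinearMap ^ k) a * w := by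
  induction k generalizing a with
  | zero => rfl
  | succ k ih =>
    rw [pow_toLinearMap_succ_apply, pow_toLinearMap_succ_apply, leibniz, hw, smul_zero, zero_add,
      smul_eq_mul, mul_comm, ih]

theorem pow_toLinearMap_apply_mul_eq_zero {p q : ℕ} {a b : A}
    (ha : (D.toLinearMap ^ (p + 1)) a = 0) (hb : (D.toLinearMap ^ (q + 1)) b = 0) :
    (D.toLinearMap ^ (p + q + 1)) (a * b) = 0 := by
  induction hn : p + q generalizing p q a b with
  | zero =>
    obtain ⟨rfl, rfl⟩ : p = 0 ∧ q = 0 := by omega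
    simp_all [leibniz]
  | succ n ih =>
    have hab : (D.toLinearMap ^ (n + 1)) (a * D b) = 0 := by
      cases q with
      | zero => simp_all [pow_toLinearMap_succ_apply]
      | succ q => exact ih ha (by rwa [← pow_toLinearMap_succ_apply]) (by omega)
    have hba : (D.toLinearMap ^ (n + 1)) (b * D a) = 0 := by
      cases p with
      | zero => simp_all [pow_toLinearMap_succ_apply]
      | succ p => exact ih hb (by rwa [← pow_toLinearMap_succ_apply]) (by omega)
    rw [pow_toLinearMap_succ_apply, leibniz, smul_eq_mul, smul_eq_mul, map_add, hab, hba,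
      add_zero]

theorem pow_toLinearMap_apply_pow_eq_zero {k : ℕ} {u : A} (hu : (D.toLinearMap ^ (k + 1)) u = 0)
    (s : ℕ) : (D.toLinearMap ^ (k * s + 1)) (u ^ s) = 0 := by
  induction s with
  | zero => simp
  | succ s ih =>
    rw [pow_succ' u, Nat.mul_succ, add_comm (k * s)]
    exact D.pow_toLinearMap_apply_mul_eq_zero hu ih

end Derivation

noncomputable def sl2F : Derivation ℂ (MvPolynomial (Fin 4) ℂ) (MvPolynomial (Fin 4) ℂ) :=
  mkDerivation ℂ ![X 0 ^ 2 - 2 * X 1, X 0 * X 1, (1 / 2 : ℂ) • (X 0 * X 2) - X 1 * X 3,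
    -((1 / 2 : ℂ) • (X 0 * X 3))]

@[simp] theorem sl2F_X_zero : sl2F (X 0) = X 0 ^ 2 - 2 * X 1 := mkDerivation_X _ _ _
@[simp] theorem sl2F_X_one : sl2F (X 1) = X 0 * X 1 := mkDerivation_X _ _ _
@[simp] theorem sl2F_X_two : sl2F (X 2) = (1 / 2 : ℂ) • (X 0 * X 2) - X 1 * X 3 :=
  mkDerivation_X _ _ _
@[simp] theorem sl2F_X_three : sl2F (X 3) = -((1 / 2 : ℂ) • (X 0 * X 3)) := mkDerivation_X _ _ _

theorem eq_sl2F (f : Derivation ℂ (MvPolynomial (Fin 4) ℂ) (MvPolynomial (Fin 4) ℂ))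
    (hf1 : f (X 0) = X 0 ^ 2 - 2 * X 1) (hf2 : f (X 1) = X 0 * X 1)
    (hf3 : f (X 2) = (1 / 2 : ℂ) • (X 0 * X 2) - X 1 * X 3)
    (hf4 : f (X 3) = -((1 / 2 : ℂ) • (X 0 * X 3))) : f = sl2F :=
  derivation_ext fun i => by fin_cases i <;> simp [hf1, hf2, hf3, hf4]

theorem sl2F_X_three_eq_smul : sl2F (X 3) = (-(1 / 2) : ℂ) • (X 0 * X 3) := by
  rw [sl2F_X_three, neg_smul]

theorem sl2F_delta : sl2F (4 * X 1 - X 0 ^ 2) = (2 : ℂ) • (X 0 * (4 * X 1 - X 0 ^ 2)) := by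
  have h4 : sl2F (4 : MvPolynomial (Fin 4) ℂ) = 0 := by simpa using sl2F.map_natCast 4
  rw [map_sub, Derivation.leibniz, Derivation.leibniz_pow, h4, sl2F_X_zero, sl2F_X_one]
  simp only [smul_eq_mul, nsmul_eq_mul, ofNat_smul_eq_nsmul]
  ring

theorem C_half_mul_two {σ K : Type*} [Field K] [NeZero (2 : K)] :
    (C (1 / 2 : K) : MvPolynomial σ K) * 2 = 1 := by
  rw [← map_ofNat C 2, ← C_mul, one_div, inv_mul_cancel₀ two_ne_zero, C_1]

theorem sl2F_v : sl2F (X 2 - (1 / 2 : ℂ) • (X 0 * X 3)) =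
    (1 / 2 : ℂ) • (X 0 * (X 2 - (1 / 2 : ℂ) • (X 0 * X 3))) := by
  rw [map_sub, Derivation.map_smul, Derivation.leibniz, sl2F_X_zero, sl2F_X_two, sl2F_X_three]
  simp only [smul_eq_mul, smul_eq_C_mul]
  -- `ring` sees `C (1 / 2)` only as an atom
  linear_combination (X 1 * X 3 + C (1 / 2 : ℂ) * X 0 ^ 2 * X 3) * C_half_mul_two (K := ℂ)

theorem sl2F_delta_pow_mul_X_three_pow_mul_v_pow (j n : ℕ) :
    sl2F ((4 * X 1 - X 0 ^ 2) ^ j * X 3 ^ (n + 4 * j) * (X 2 - (1 / 2 : ℂ) • (X 0 * X 3)) ^ n)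
      = 0 := by
  have hweight : ((j : ℂ) * 2 + (n + 4 * j : ℕ) * (-(1 / 2))) + n * (1 / 2) = 0 := by
    push_cast; ring
  rw [sl2F.apply_mul_of_apply_eq_smul_mul
    (sl2F.apply_mul_of_apply_eq_smul_mul (sl2F.apply_pow_of_apply_eq_smul_mul sl2F_delta j)
      (sl2F.apply_pow_of_apply_eq_smul_mul sl2F_X_three_eq_smul _))
    (sl2F.apply_pow_of_apply_eq_smul_mul sl2F_v n), hweight, zero_smul]

theorem sl2F_X_three_sq : sl2F (X 3 ^ 2) = -(X 0 * X 3 ^ 2) := by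
  rw [sl2F.apply_pow_of_apply_eq_smul_mul sl2F_X_three_eq_smul 2]
  norm_num

theorem pow_three_sl2F_apply_X_three_sq :
    (sl2F.toLinearMap ^ 3) (X 3 ^ 2 : MvPolynomial (Fin 4) ℂ) = 0 := by
  have h1 : sl2F (X 0 * X 3 ^ 2) = -(2 • (X 1 * X 3 ^ 2)) := by
    rw [Derivation.leibniz, sl2F_X_three_sq, sl2F_X_zero, smul_eq_mul, smul_eq_mul]; ring
  have h2 : sl2F (X 1 * X 3 ^ 2) = 0 := by
    rw [Derivation.leibniz, sl2F_X_three_sq, sl2F_X_one, smul_eq_mul, smul_eq_mul]; ring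
  rw [Derivation.pow_toLinearMap_succ_apply, Derivation.pow_toLinearMap_succ_apply,
    Derivation.pow_toLinearMap_succ_apply, pow_zero, Module.End.one_apply, sl2F_X_three_sq]
  simp only [map_neg, h1, map_nsmul, h2, smul_zero, neg_zero]

theorem f_iterate_kills_delta_A1m_vn
    (f : Derivation ℂ (MvPolynomial (Fin 4) ℂ) (MvPolynomial (Fin 4) ℂ))
    (hf1 : f (X 0) = X 0 ^ 2 - 2 * X 1) (hf2 : f (X 1) = X 0 * X 1)
    (hf3 : f (X 2) = (1 / 2 : ℂ) • (X 0 * X 2) - X 1 * X 3)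
    (hf4 : f (X 3) = -((1 / 2 : ℂ) • (X 0 * X 3)))
    (δ v : MvPolynomial (Fin 4) ℂ)
    (hδ : δ = 4 * X 1 - X 0 ^ 2) (hv : v = X 2 - (1 / 2 : ℂ) • (X 0 * X 3))
    (j m n : ℕ) (hge : n + 4 * j ≤ m) (heven : Even (m - n - 4 * j)) :
    (f.toLinearMap ^ (m - n - 4 * j + 1)) (δ ^ j * X 3 ^ m * v ^ n) = 0 := by
  obtain rfl := eq_sl2F f hf1 hf2 hf3 hf4
  have hW : sl2F (δ ^ j * X 3 ^ (n + 4 * j) * v ^ n) = 0 := by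
    rw [hδ, hv]
    exact sl2F_delta_pow_mul_X_three_pow_mul_v_pow j n
  obtain ⟨s, hs⟩ := heven
  obtain rfl : m = 2 * s + (n + 4 * j) := by omega
  have hsplit : δ ^ j * X 3 ^ (2 * s + (n + 4 * j)) * v ^ n
      = (X 3 ^ 2) ^ s * (δ ^ j * X 3 ^ (n + 4 * j) * v ^ n) := by ring
  rw [show 2 * s + (n + 4 * j) - n - 4 * j + 1 = 2 * s + 1 by omega, hsplit,
    sl2F.pow_toLinearMap_apply_mul_of_apply_eq_zero hW,
    sl2F.pow_toLinearMap_apply_pow_eq_zero pow_three_sl2F_apply_X_three_sq, zero_mul]
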